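/- Let X be a metric space, S ⊆ X a nonempty subset, and define the geometric nonclassicality N_S(x) := infDist(x, S). Let ρ : ℝ → X be a curve and λ_c ∈ ℝ. If the second difference quotient (N_S(ρ(λ_c + δ)) − 2·N_S(ρ(λ_c)) + N_S(ρ(λ_c − δ)))/δ² tends to +∞ as δ → 0⁺, then the quantity (dist(ρ(λ_c + δ), ρ(λ_c)) + dist(ρ(λ_c − δ), ρ(λ_c)))/δ² also tends to +∞ as δ → 0⁺. -/
import Mathlib


open Metric Filter

/-- If the second difference quotient of the geometric
nonclassicality `N_S(x) = infDist x S` along the curve `ρ` diverges to `+∞`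
at `λ_c` as `δ → 0⁺`, then so does
`(dist(ρ(λ_c+δ), ρ(λ_c)) + dist(ρ(λ_c−δ), ρ(λ_c))) / δ²`. -/
theorem gns_second_difference_divergence
    {X : Type*} [MetricSpace X] (S : Set X) (hS : S.Nonempty)
    (ρ : ℝ → X) (lc : ℝ)
    (h : Tendsto (fun δ : ℝ =>
        (infDist (ρ (lc + δ)) S - 2 * infDist (ρ lc) S + infDist (ρ (lc - δ)) S) / δ ^ 2)
      (nhdsWithin 0 (Set.Ioi 0)) atTop) :
    Tendsto (fun δ : ℝ =>
        (dist (ρ (lc + δ)) (ρ lc) + dist (ρ (lc - δ)) (ρ lc)) / δ ^ 2)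
      (nhdsWithin 0 (Set.Ioi 0)) atTop := by
  refine tendsto_atTop_mono' _ ?_ h
  filter_upwards [self_mem_nhdsWithin] with δ (hδ : (0:ℝ) < δ)
  have h1 : infDist (ρ (lc + δ)) S - infDist (ρ lc) S ≤ dist (ρ (lc + δ)) (ρ lc) := by
    have := infDist_le_infDist_add_dist (x := ρ (lc + δ)) (y := ρ lc) (s := S)
    linarith
  have h2 : infDist (ρ (lc - δ)) S - infDist (ρ lc) S ≤ dist (ρ (lc - δ)) (ρ lc) := by
    have := infDist_le_infDist_add_dist (x := ρ (lc - δ)) (y := ρ lc) (s := S)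
    linarith
  have hδ2 : (0:ℝ) < δ ^ 2 := by positivity
  gcongr ?_ / δ ^ 2
  linarith
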